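/- Let (H,{F_A},{F_G}) be a GR(1) game with singleton winning conditions, Z^∞ = ⟦φ₄⟧, and f¹ the memoryless strategy extracted from the rank. Then for all q ∈ Z^∞, L_q(H,f¹) ⊆ L̄_q(H,F_A) ∪ L_q(H,F_G); that is, every play from q compliant with f¹ that visits F_A infinitely often also visits F_G infinitely often. -/

import Mathlib

/-!
Every state of `Z^∞` has a rank, and `Z^∞` is closed under environment moves and
under `f¹`. Along a compliant play that avoids `F_G` from some point on, the first rank
component `i` never increases: an environment state of `Wⁱ_j ∖ F_G` lies in `Pre¹(Yⁱ)`,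
and `f¹` decreases the rank. A state of `F_A ∖ F_G` can only have entered `Wⁱ_j` through
`Pre¹(Yⁱ⁻¹) ⊆ Wⁱ_1`, so its rank is `(i, 1)` and the next state lies in `Yⁱ⁻¹`. Hence
infinitely many visits to `F_A` would make the antitone sequence of first rank components
decrease infinitely often.
-/

namespace GR1

/-- A two-player game graph `H = ⟨Q⁰, Q¹, δ⁰, δ¹, q₀⟩`.  `env` is the set `Q⁰` of
environment states, `sys` the set `Q¹` of system states, and `delta` combines the
transition functions `δ⁰` and `δ¹`. -/
structure GameGraph (Q : Type*) where
  env : Set Q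
  sys : Set Q
  delta : Q → Set Q
  disjoint_env_sys : Disjoint env sys
  union_env_sys : env ∪ sys = Set.univ
  delta_env : ∀ q ∈ env, delta q ⊆ sys
  delta_sys : ∀ q ∈ sys, delta q ⊆ env
  delta_nonempty : ∀ q, (delta q).Nonempty
  init : Q
  init_env : init ∈ env

namespace GameGraph

/-- The existential predecessor operator `Pre∃`. -/
def PreE {Q : Type*} (G : GameGraph Q) (P : Set Q) : Set Q :=
  {q | (G.delta q ∩ P).Nonempty}

/-- The universal predecessor operator `Pre∀`. -/
def PreA {Q : Type*} (G : GameGraph Q) (P : Set Q) : Set Q :=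
  {q | G.delta q ⊆ P}

/-- The player-0 (environment) controllable predecessor operator `Pre⁰`. -/
def Pre0 {Q : Type*} (G : GameGraph Q) (P : Set Q) : Set Q :=
  {q | q ∈ G.env ∧ (G.delta q ∩ P).Nonempty} ∪ {q | q ∈ G.sys ∧ G.delta q ⊆ P}

/-- The player-1 (system) controllable predecessor operator `Pre¹`. -/
def Pre1 {Q : Type*} (G : GameGraph Q) (P : Set Q) : Set Q :=
  {q | q ∈ G.env ∧ G.delta q ⊆ P} ∪ {q | q ∈ G.sys ∧ (G.delta q ∩ P).Nonempty}

/-- The conditional predecessor `Precond(P,P') = Pre∃(P) ∩ Pre¹(P ∪ P')`. -/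
def Precond {Q : Type*} (G : GameGraph Q) (P P' : Set Q) : Set Q :=
  G.PreE P ∩ G.Pre1 (P ∪ P')

/-- The dual conditional predecessor `Precondᶜ(P,P') = Pre∀(P) ∪ Pre⁰(P ∩ P')`. -/
def PrecondC {Q : Type*} (G : GameGraph Q) (P P' : Set Q) : Set Q :=
  G.PreA P ∪ G.Pre0 (P ∩ P')

end GameGraph

/-- Knaster–Tarski least fixed point over the powerset lattice. -/
def lfpSet {Q : Type*} (F : Set Q → Set Q) : Set Q := ⋂₀ {S | F S ⊆ S}

/-- Knaster–Tarski greatest fixed point over the powerset lattice. -/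
def gfpSet {Q : Type*} (F : Set Q → Set Q) : Set Q := ⋃₀ {S | S ⊆ F S}

/-- Knaster–Tarski least fixed point over the lattice of vectors of sets. -/
def lfpVec {Q : Type*} {n : ℕ} (F : (Fin n → Set Q) → (Fin n → Set Q)) : Fin n → Set Q :=
  fun a => ⋂ V ∈ {V : Fin n → Set Q | ∀ a', F V a' ⊆ V a'}, V a

/-- Knaster–Tarski greatest fixed point over the lattice of vectors of sets. -/
def gfpVec {Q : Type*} {n : ℕ} (F : (Fin n → Set Q) → (Fin n → Set Q)) : Fin n → Set Q :=
  fun a => ⋃ V ∈ {V : Fin n → Set Q | ∀ a', V a' ⊆ F V a'}, V a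

/-- Cyclic successor of a mode: `a⁺ = (a mod n) + 1` in 1-based counting. -/
def modeSucc {n : ℕ} (a : Fin n) : Fin n :=
  ⟨(a.val + 1) % n, Nat.mod_lt _ a.pos⟩

/-- `π` is an (infinite) play over `G` starting in the state `q`. -/
def IsPlayFrom {Q : Type*} (G : GameGraph Q) (q : Q) (π : ℕ → Q) : Prop :=
  π 0 = q ∧ ∀ k, π (k + 1) ∈ G.delta (π k)

/-- `Inf(π) ∩ F ≠ ∅` : the play `π` visits the set `F` infinitely often. -/
def InfOft {Q : Type*} (π : ℕ → Q) (F : Set Q) : Prop := ∀ n, ∃ k, n ≤ k ∧ π k ∈ F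

/-- `L_q(H,F)` : plays from `q` satisfying the Büchi condition `F`. -/
def LBuchi {Q : Type*} (G : GameGraph Q) (q : Q) (F : Set Q) : Set (ℕ → Q) :=
  {π | IsPlayFrom G q π ∧ InfOft π F}

/-- `L_q(H,𝓕)` : plays from `q` satisfying the generalized Büchi condition `𝓕`. -/
def LGenBuchi {Q ι : Type*} (G : GameGraph Q) (q : Q) (F : ι → Set Q) : Set (ℕ → Q) :=
  {π | IsPlayFrom G q π ∧ ∀ i, InfOft π (F i)}

/-- `Pre(L)` : the set of all finite prefixes of the (infinite) words in `L`. -/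
def prefixes {Q : Type*} (L : Set (ℕ → Q)) : Set (List Q) :=
  {w | ∃ π ∈ L, ∃ k, w = (List.range k).map π}

/-- A (history dependent) system strategy: on a history ending in a system state it
produces a `δ¹`-successor of that state. -/
def IsSysStrategy {Q : Type*} (G : GameGraph Q) (f : List Q → Q) : Prop :=
  ∀ (w : List Q) (q : Q), q ∈ G.sys → f (w ++ [q]) ∈ G.delta q

/-- The finite history `π|_{[0,k]}` of a play. -/
def histUpTo {Q : Type*} (π : ℕ → Q) (k : ℕ) : List Q := (List.range (k + 1)).map π

/-- `L_q(H,f¹)` : plays from `q` compliant with the system strategy `f¹`. -/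
def Lstrat {Q : Type*} (G : GameGraph Q) (q : Q) (f : List Q → Q) : Set (ℕ → Q) :=
  {π | IsPlayFrom G q π ∧ ∀ k, π k ∈ G.sys → π (k + 1) = f (histUpTo π k)}

/-- `L_q(H,f¹)` for a memoryless system strategy `f¹ : Q → Q`. -/
def Lmem {Q : Type*} (G : GameGraph Q) (q : Q) (f : Q → Q) : Set (ℕ → Q) :=
  {π | IsPlayFrom G q π ∧ ∀ k, π k ∈ G.sys → π (k + 1) = f (π k)}

/-- Strict lexicographic order on ranks. -/
def rankLt (p r : ℕ × ℕ) : Prop := p.1 < r.1 ∨ (p.1 = r.1 ∧ p.2 < r.2)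

/-- Lexicographic order on ranks. -/
def rankLe (p r : ℕ × ℕ) : Prop := p.1 < r.1 ∨ (p.1 = r.1 ∧ p.2 ≤ r.2)

/-! ### The 4-nested fixed point `φ₄` for singleton winning conditions -/

/-- The body `(F_G ∩ Pre¹(Z)) ∪ Pre¹(Y) ∪ ((Q∖F_A) ∩ Precond(W, X∖F_A))`. -/
def body {Q : Type*} (G : GameGraph Q) (FA FG Z Y X W : Set Q) : Set Q :=
  (FG ∩ G.Pre1 Z) ∪ G.Pre1 Y ∪ (FAᶜ ∩ G.Precond W (X \ FA))

def innerW {Q : Type*} (G : GameGraph Q) (FA FG Z Y X : Set Q) : Set Q :=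
  lfpSet (fun W => body G FA FG Z Y X W)

def innerX {Q : Type*} (G : GameGraph Q) (FA FG Z Y : Set Q) : Set Q :=
  gfpSet (fun X => innerW G FA FG Z Y X)

def innerY {Q : Type*} (G : GameGraph Q) (FA FG Z : Set Q) : Set Q :=
  lfpSet (fun Y => innerX G FA FG Z Y)

/-- `⟦φ₄⟧ = Z^∞` : the value of `νZ.μY.νX.μW. (F_G ∩ Pre¹(Z)) ∪ Pre¹(Y) ∪
((Q∖F_A) ∩ Precond(W, X∖F_A))`. -/
def phi4 {Q : Type*} (G : GameGraph Q) (FA FG : Set Q) : Set Q :=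
  gfpSet (fun Z => innerY G FA FG Z)

/-- The approximants `Yⁱ` of `Y` in the terminal iteration over `Z` (`Y⁰ = ∅`). -/
def Yapprox {Q : Type*} (G : GameGraph Q) (FA FG : Set Q) : ℕ → Set Q
  | 0 => ∅
  | i + 1 => innerX G FA FG (phi4 G FA FG) (Yapprox G FA FG i)

/-- The approximants `Wⁱ_j` of `W` computed with `X = Xⁱ = Yⁱ` and `Y = Yⁱ⁻¹`. -/
def Wapprox {Q : Type*} (G : GameGraph Q) (FA FG : Set Q) (i : ℕ) : ℕ → Set Q
  | 0 => ∅
  | j + 1 =>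
      body G FA FG (phi4 G FA FG) (Yapprox G FA FG (i - 1)) (Yapprox G FA FG i)
        (Wapprox G FA FG i j)

/-- `rank(q) = (i,j)` iff `q ∈ (Yⁱ∖Yⁱ⁻¹) ∩ (Wⁱ_j∖Wⁱ_{j−1})` with `i,j > 0`. -/
def hasRank {Q : Type*} (G : GameGraph Q) (FA FG : Set Q) (q : Q) (i j : ℕ) : Prop :=
  0 < i ∧ 0 < j ∧
    q ∈ (Yapprox G FA FG i \ Yapprox G FA FG (i - 1)) ∩
        (Wapprox G FA FG i j \ Wapprox G FA FG i (j - 1))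

/-- The memoryless system strategy extracted from the ranking: `f¹(q) ∈ δ¹(q)`,
`rank(f¹(q)) < rank(q)` whenever `rank(q) > (1,1)`, and `f¹(q) ∈ Z^∞` otherwise. -/
def GoodStrategy {Q : Type*} (G : GameGraph Q) (FA FG : Set Q) (f : Q → Q) : Prop :=
  ∀ q, q ∈ G.sys → q ∈ phi4 G FA FG →
    f q ∈ G.delta q ∧
      ∀ i j, hasRank G FA FG q i j →
        (((i, j) = ((1 : ℕ), (1 : ℕ)) → f q ∈ phi4 G FA FG) ∧
          ((i, j) ≠ ((1 : ℕ), (1 : ℕ)) →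
            ∃ i' j', hasRank G FA FG (f q) i' j' ∧ rankLt (i', j') (i, j)))

/-! ### The negated fixed point `φ̄₄` (singleton conditions) -/

/-- The simplified negated body
`Pre⁰(Z̄) ∪ ((Q∖F_G) ∩ F_A ∩ Pre⁰(Ȳ)) ∪ ((Q∖F_G) ∩ Precondᶜ(W̄, X̄ ∪ F_A))`. -/
def nbody {Q : Type*} (G : GameGraph Q) (FA FG Z Y X W : Set Q) : Set Q :=
  G.Pre0 Z ∪ (FGᶜ ∩ FA ∩ G.Pre0 Y) ∪ (FGᶜ ∩ G.PrecondC W (X ∪ FA))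

/-- The simplified negated fixed point `φ̄₄ = μZ̄.νȲ.μX̄.νW̄. nbody`. -/
def phi4neg {Q : Type*} (G : GameGraph Q) (FA FG : Set Q) : Set Q :=
  lfpSet (fun Z => gfpSet (fun Y => lfpSet (fun X => gfpSet (fun W =>
    nbody G FA FG Z Y X W))))

/-- The unsimplified negation body
`((Q∖F_G) ∪ Pre⁰(Z̄)) ∩ Pre⁰(Ȳ) ∩ (F_A ∪ Precondᶜ(W̄, X̄ ∪ F_A))`. -/
def nbodyRaw {Q : Type*} (G : GameGraph Q) (FA FG Z Y X W : Set Q) : Set Q :=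
  (FGᶜ ∪ G.Pre0 Z) ∩ G.Pre0 Y ∩ (FA ∪ G.PrecondC W (X ∪ FA))

/-- The unsimplified negated fixed point. -/
def phi4negRaw {Q : Type*} (G : GameGraph Q) (FA FG : Set Q) : Set Q :=
  lfpSet (fun Z => gfpSet (fun Y => lfpSet (fun X => gfpSet (fun W =>
    nbodyRaw G FA FG Z Y X W))))

/-- The approximants `Z̄ⁱ` of the negated fixed point (`Z̄⁰ = ∅`). -/
def Zbar {Q : Type*} (G : GameGraph Q) (FA FG : Set Q) : ℕ → Set Q
  | 0 => ∅
  | i + 1 =>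
      gfpSet (fun Y => lfpSet (fun X => gfpSet (fun W =>
        nbody G FA FG (Zbar G FA FG i) Y X W)))

/-- The approximants `X̄ⁱ_j` of `X̄` computed while computing `Z̄ⁱ` (using `Ȳ = Z̄ⁱ` and
`Z̄ = Z̄ⁱ⁻¹`), with `X̄ⁱ₀ = ∅`. -/
def Xbar {Q : Type*} (G : GameGraph Q) (FA FG : Set Q) (i : ℕ) : ℕ → Set Q
  | 0 => ∅
  | j + 1 =>
      gfpSet (fun W =>
        nbody G FA FG (Zbar G FA FG (i - 1)) (Zbar G FA FG i) (Xbar G FA FG i j) W)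

/-- The negated rank: `rank(q) = (i,j)` iff `q ∈ X̄ⁱ_j ∖ X̄ⁱ_{j−1}` with `i,j > 0`. -/
def nrank {Q : Type*} (G : GameGraph Q) (FA FG : Set Q) (q : Q) (i j : ℕ) : Prop :=
  0 < i ∧ 0 < j ∧ q ∈ Xbar G FA FG i j \ Xbar G FA FG i (j - 1)

/-- Environment moves permitted during the inductive construction of the reachable
region `R_{f¹}` (cases (a'), (b'), (c'2), (c'3) and the remaining case (c'1)). -/
def envStep {Q : Type*} (G : GameGraph Q) (FA FG : Set Q) (q' q'' : Q) : Prop :=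
  q'' ∈ G.delta q' ∧
    ∃ i j, nrank G FA FG q' i j ∧
      ((q'' ∈ (phi4 G FA FG)ᶜ ∧ ∃ i' j', nrank G FA FG q'' i' j' ∧ i' ≤ i - 1) ∨
       (q' ∈ FA \ FG ∧ q'' ∈ (phi4 G FA FG)ᶜ ∧
          ∃ i' j', nrank G FA FG q'' i' j' ∧ i' ≤ i) ∨
       (q'' ∈ (phi4 G FA FG)ᶜ ∧
          ∃ i' j', nrank G FA FG q'' i' j' ∧ rankLe (i', j') (i, j - 1)) ∨
       (q'' ∈ (phi4 G FA FG)ᶜ ∧ q'' ∈ FA ∧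
          ∃ i' j', nrank G FA FG q'' i' j' ∧ rankLe (i', j') (i, j)) ∨
       (∀ p ∈ G.delta q', p ∈ (phi4 G FA FG)ᶜ ∧
          ∃ i' j', nrank G FA FG p i' j' ∧ rankLe (i', j') (i, j)))

/-- `L_q(H,f¹,R_{f¹})` : plays from `q` compliant with `f¹` that remain within the
reachable region `R_{f¹}`, i.e. in which every environment move follows the rules of
the inductive construction of `R_{f¹}`. -/
def Lrestr {Q : Type*} (G : GameGraph Q) (FA FG : Set Q) (q : Q) (f : List Q → Q) :
    Set (ℕ → Q) :=
  {π | π ∈ Lstrat G q f ∧ ∀ k, π k ∈ G.env → envStep G FA FG (π k) (π (k + 1))}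

/-! ### The vectorized fixed point `φ₄ᵛ` for general GR(1) conditions -/

/-- The body `Ω^{ab}` of the vectorized fixed point. -/
def bodyV {Q : Type*} {n m : ℕ} (G : GameGraph Q) (FAv : Fin m → Set Q)
    (FGv : Fin n → Set Q) (Zv : Fin n → Set Q) (a : Fin n) (b : Fin m)
    (Y X W : Set Q) : Set Q :=
  (FGv a ∩ G.Pre1 (Zv (modeSucc a))) ∪ G.Pre1 Y ∪ ((FAv b)ᶜ ∩ G.Precond W (X \ FAv b))

def innerWV {Q : Type*} {n m : ℕ} (G : GameGraph Q) (FAv : Fin m → Set Q)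
    (FGv : Fin n → Set Q) (Zv : Fin n → Set Q) (a : Fin n) (b : Fin m)
    (Y X : Set Q) : Set Q :=
  lfpSet (fun W => bodyV G FAv FGv Zv a b Y X W)

def innerXV {Q : Type*} {n m : ℕ} (G : GameGraph Q) (FAv : Fin m → Set Q)
    (FGv : Fin n → Set Q) (Zv : Fin n → Set Q) (a : Fin n) (b : Fin m)
    (Y : Set Q) : Set Q :=
  gfpSet (fun X => innerWV G FAv FGv Zv a b Y X)

/-- The vector `[Z¹,…,Zⁿ]` of the vectorized fixed point `φ₄ᵛ`. -/
def phi4v {Q : Type*} {n m : ℕ} (G : GameGraph Q) (FAv : Fin m → Set Q)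
    (FGv : Fin n → Set Q) : Fin n → Set Q :=
  gfpVec (fun Zv a => lfpSet (fun Y => ⋃ b, innerXV G FAv FGv Zv a b Y))

/-- `⟦φ₄ᵛ⟧ = Z^∞ = ⋃_a Zᵃ^∞`. -/
def phi4vSem {Q : Type*} {n m : ℕ} (G : GameGraph Q) (FAv : Fin m → Set Q)
    (FGv : Fin n → Set Q) : Set Q :=
  ⋃ a, phi4v G FAv FGv a

/-- The approximants `ᵃYⁱ` (with `ᵃY⁰ = ∅`) of `Yᵃ` in the terminal iteration. -/
def YapproxV {Q : Type*} {n m : ℕ} (G : GameGraph Q) (FAv : Fin m → Set Q)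
    (FGv : Fin n → Set Q) (a : Fin n) : ℕ → Set Q
  | 0 => ∅
  | i + 1 => ⋃ b, innerXV G FAv FGv (phi4v G FAv FGv) a b (YapproxV G FAv FGv a i)

/-- The fixed point `ᵃᵇXⁱ` of `X^{ab}` computed during the `i`-th iteration. -/
def XfixV {Q : Type*} {n m : ℕ} (G : GameGraph Q) (FAv : Fin m → Set Q)
    (FGv : Fin n → Set Q) (a : Fin n) (b : Fin m) (i : ℕ) : Set Q :=
  innerXV G FAv FGv (phi4v G FAv FGv) a b (YapproxV G FAv FGv a (i - 1))

/-- The approximants `ᵃᵇWⁱ_j` of `W^{ab}` computed while computing `ᵃYⁱ`. -/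
def WapproxV {Q : Type*} {n m : ℕ} (G : GameGraph Q) (FAv : Fin m → Set Q)
    (FGv : Fin n → Set Q) (a : Fin n) (b : Fin m) (i : ℕ) : ℕ → Set Q
  | 0 => ∅
  | j + 1 =>
      bodyV G FAv FGv (phi4v G FAv FGv) a b (YapproxV G FAv FGv a (i - 1))
        (XfixV G FAv FGv a b i) (WapproxV G FAv FGv a b i j)

/-- The mode-based rank: `ᵃᵇrank(q) = (i,j)` iff
`q ∈ (ᵃYⁱ∖ᵃYⁱ⁻¹) ∩ (ᵃᵇWⁱ_j∖ᵃᵇWⁱ_{j−1})` with `i,j > 0`. -/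
def hasRankV {Q : Type*} {n m : ℕ} (G : GameGraph Q) (FAv : Fin m → Set Q)
    (FGv : Fin n → Set Q) (a : Fin n) (b : Fin m) (q : Q) (i j : ℕ) : Prop :=
  0 < i ∧ 0 < j ∧
    q ∈ (YapproxV G FAv FGv a i \ YapproxV G FAv FGv a (i - 1)) ∩
        (WapproxV G FAv FGv a b i j \ WapproxV G FAv FGv a b i (j - 1))

/-- The finite-memory system strategy extracted from the mode-based ranking. -/
def GoodStrategyV {Q : Type*} {n m : ℕ} (G : GameGraph Q) (FAv : Fin m → Set Q)
    (FGv : Fin n → Set Q) (f : Q × Fin n × Fin m → Q × Fin n × Fin m) : Prop :=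
  ∀ (q : Q) (a : Fin n) (b : Fin m), q ∈ G.sys → q ∈ phi4v G FAv FGv a →
    (f (q, a, b)).1 ∈ G.delta q ∧
      ∀ i j, hasRankV G FAv FGv a b q i j →
        (((i, j) = ((1 : ℕ), (1 : ℕ)) →
            (f (q, a, b)).1 ∈ phi4v G FAv FGv (modeSucc a) ∧
              (f (q, a, b)).2.1 = modeSucc a) ∧
          (1 < i ∧ j = 1 →
            (f (q, a, b)).2.1 = a ∧
              ∃ i' j',
                hasRankV G FAv FGv a ((f (q, a, b)).2.2) ((f (q, a, b)).1) i' j' ∧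
                  i' ≤ i - 1) ∧
          (1 < j →
            (f (q, a, b)).2.1 = a ∧ (f (q, a, b)).2.2 = b ∧
              ∃ i' j',
                hasRankV G FAv FGv a b ((f (q, a, b)).1) i' j' ∧
                  rankLe (i', j') (i, j - 1)))

/-- Compliance of a play with a finite-memory strategy via mode traces `α`, `β`. -/
def CompliantModeV {Q : Type*} {n m : ℕ} (G : GameGraph Q) (FAv : Fin m → Set Q)
    (FGv : Fin n → Set Q) (f : Q × Fin n × Fin m → Q × Fin n × Fin m)
    (π : ℕ → Q) (α : ℕ → Fin n) (β : ℕ → Fin m) : Prop :=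
  ∀ k,
    (π k ∈ G.sys → (π (k + 1), α (k + 1), β (k + 1)) = f (π k, α k, β k)) ∧
      (π k ∈ G.env →
        (hasRankV G FAv FGv (α k) (β k) (π (k + 1)) 1 1 →
            α (k + 1) = modeSucc (α k)) ∧
          ((∃ i, 1 < i ∧ hasRankV G FAv FGv (α k) (β k) (π (k + 1)) i 1) →
            α (k + 1) = α k) ∧
          ((∃ i j, 1 < j ∧ hasRankV G FAv FGv (α k) (β k) (π (k + 1)) i j) →
            α (k + 1) = α k ∧ β (k + 1) = β k))

/-- `L_q(H,f¹)` for a finite-memory strategy: plays from `q` compliant with `f¹`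
for some mode traces. -/
def LmodeV {Q : Type*} {n m : ℕ} (G : GameGraph Q) (FAv : Fin m → Set Q)
    (FGv : Fin n → Set Q) (q : Q) (f : Q × Fin n × Fin m → Q × Fin n × Fin m) :
    Set (ℕ → Q) :=
  {π | IsPlayFrom G q π ∧ ∃ α β, CompliantModeV G FAv FGv f π α β}

/-- `ᵃD = F_Gᵃ ∩ Pre¹(Z^{a⁺,∞})`. -/
def DsetV {Q : Type*} {n m : ℕ} (G : GameGraph Q) (FAv : Fin m → Set Q)
    (FGv : Fin n → Set Q) (a : Fin n) : Set Q :=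
  FGv a ∩ G.Pre1 (phi4v G FAv FGv (modeSucc a))

/-- `ᵃEⁱ = Pre¹(ᵃYⁱ⁻¹) ∖ ᵃYⁱ⁻¹`. -/
def EsetV {Q : Type*} {n m : ℕ} (G : GameGraph Q) (FAv : Fin m → Set Q)
    (FGv : Fin n → Set Q) (a : Fin n) (i : ℕ) : Set Q :=
  G.Pre1 (YapproxV G FAv FGv a (i - 1)) \ YapproxV G FAv FGv a (i - 1)

/-- `ᵃᵇΘⁱ_j = (Q∖F_Aᵇ) ∩ Precond(ᵃᵇWⁱ_{j−1}, ᵃᵇXⁱ∖F_Aᵇ)`. -/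
def ThetaV {Q : Type*} {n m : ℕ} (G : GameGraph Q) (FAv : Fin m → Set Q)
    (FGv : Fin n → Set Q) (a : Fin n) (b : Fin m) (i j : ℕ) : Set Q :=
  (FAv b)ᶜ ∩ G.Precond (WapproxV G FAv FGv a b i (j - 1)) (XfixV G FAv FGv a b i \ FAv b)

/-- `ᵃᵇRⁱ_j = ᵃᵇΘⁱ_j ∖ (ᵃᵇWⁱ_{j−1} ∪ ᵃYⁱ⁻¹ ∪ ᵃEⁱ ∪ ᵃD)`. -/
def RsetV {Q : Type*} {n m : ℕ} (G : GameGraph Q) (FAv : Fin m → Set Q)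
    (FGv : Fin n → Set Q) (a : Fin n) (b : Fin m) (i j : ℕ) : Set Q :=
  ThetaV G FAv FGv a b i j \
    (WapproxV G FAv FGv a b i (j - 1) ∪ YapproxV G FAv FGv a (i - 1) ∪
      EsetV G FAv FGv a i ∪ DsetV G FAv FGv a)

/-! ### The negated vectorized fixed point -/

/-- The body of the negated vectorized fixed point. -/
def nbodyV {Q : Type*} {n m : ℕ} (G : GameGraph Q) (FAv : Fin m → Set Q)
    (FGv : Fin n → Set Q) (Zv : Fin n → Set Q) (a : Fin n) (b : Fin m)
    (Y X W : Set Q) : Set Q :=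
  G.Pre0 (Zv (modeSucc a)) ∪ ((FGv a)ᶜ ∩ FAv b ∩ G.Pre0 Y) ∪
    ((FGv a)ᶜ ∩ G.PrecondC W (X ∪ FAv b))

/-- The coordinated approximants `Z̄ᵃⁱ` of the negated vectorized fixed point. -/
def ZbarV {Q : Type*} {n m : ℕ} (G : GameGraph Q) (FAv : Fin m → Set Q)
    (FGv : Fin n → Set Q) : ℕ → Fin n → Set Q
  | 0 => fun _ => ∅
  | i + 1 => fun a =>
      gfpSet (fun Y => ⋂ b, lfpSet (fun X => gfpSet (fun W =>
        nbodyV G FAv FGv (ZbarV G FAv FGv i) a b Y X W)))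

/-- The approximants `X̄^{ab,i}_j` of `X̄^{ab}` computed during the `i`-th iteration. -/
def XbarV {Q : Type*} {n m : ℕ} (G : GameGraph Q) (FAv : Fin m → Set Q)
    (FGv : Fin n → Set Q) (a : Fin n) (b : Fin m) (i : ℕ) : ℕ → Set Q
  | 0 => ∅
  | j + 1 =>
      gfpSet (fun W =>
        nbodyV G FAv FGv (ZbarV G FAv FGv (i - 1)) a b (ZbarV G FAv FGv i a)
          (XbarV G FAv FGv a b i j) W)

/-- The negated mode-based rank: `ᵃᵇrank(q) = (i,j)` iff `q ∈ X̄^{ab,i}_j∖X̄^{ab,i}_{j−1}`. -/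
def nrankV {Q : Type*} {n m : ℕ} (G : GameGraph Q) (FAv : Fin m → Set Q)
    (FGv : Fin n → Set Q) (a : Fin n) (b : Fin m) (q : Q) (i j : ℕ) : Prop :=
  0 < i ∧ 0 < j ∧ q ∈ XbarV G FAv FGv a b i j \ XbarV G FAv FGv a b i (j - 1)

/-- Environment moves permitted during the inductive construction of `R_{f¹}`
in the vectorized setting. -/
def envStepV {Q : Type*} {n m : ℕ} (G : GameGraph Q) (FAv : Fin m → Set Q)
    (FGv : Fin n → Set Q) (q' q'' : Q) : Prop :=
  q'' ∈ G.delta q' ∧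
    ∃ (a : Fin n) (b : Fin m) (i j : ℕ), nrankV G FAv FGv a b q' i j ∧
      ((q'' ∈ (phi4vSem G FAv FGv)ᶜ ∧
          ∃ b' i' j', nrankV G FAv FGv (modeSucc a) b' q'' i' j' ∧ i' ≤ i - 1) ∨
       (q' ∈ FAv b \ FGv a ∧ q'' ∈ (phi4vSem G FAv FGv)ᶜ ∧
          ∃ b' i' j', nrankV G FAv FGv a b' q'' i' j' ∧ i' ≤ i) ∨
       (q'' ∈ (phi4vSem G FAv FGv)ᶜ ∧
          ∃ i' j', nrankV G FAv FGv a b q'' i' j' ∧ rankLe (i', j') (i, j - 1)) ∨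
       (q'' ∈ (phi4vSem G FAv FGv)ᶜ ∧ q'' ∈ FAv b ∧
          ∃ i' j', nrankV G FAv FGv a b q'' i' j' ∧ rankLe (i', j') (i, j)) ∨
       (∀ p ∈ G.delta q', p ∈ (phi4vSem G FAv FGv)ᶜ ∧
          ∃ i' j', nrankV G FAv FGv a b p i' j' ∧ rankLe (i', j') (i, j)))

/-- `L_q(H,f¹,R_{f¹})` in the vectorized setting. -/
def LrestrV {Q : Type*} {n m : ℕ} (G : GameGraph Q) (FAv : Fin m → Set Q)
    (FGv : Fin n → Set Q) (q : Q) (f : List Q → Q) : Set (ℕ → Q) :=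
  {π | π ∈ Lstrat G q f ∧ ∀ k, π k ∈ G.env → envStepV G FAv FGv (π k) (π (k + 1))}

section FixedPoints

variable {Q : Type*} {F F' : Set Q → Set Q}

theorem lfpSet_eq_lfp (hF : Monotone F) : lfpSet F = OrderHom.lfp ⟨F, hF⟩ :=
  (Set.sInf_eq_sInter (α := Q) _).symm

theorem gfpSet_eq_gfp (hF : Monotone F) : gfpSet F = OrderHom.gfp ⟨F, hF⟩ :=
  (Set.sSup_eq_sUnion (α := Q) _).symm

theorem map_lfpSet (hF : Monotone F) : F (lfpSet F) = lfpSet F := by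
  rw [lfpSet_eq_lfp hF]
  exact (⟨F, hF⟩ : Set Q →o Set Q).map_lfp

theorem map_gfpSet (hF : Monotone F) : F (gfpSet F) = gfpSet F := by
  rw [gfpSet_eq_gfp hF]
  exact (⟨F, hF⟩ : Set Q →o Set Q).map_gfp

theorem lfpSet_subset_of_map_subset {S : Set Q} (h : F S ⊆ S) : lfpSet F ⊆ S :=
  Set.sInter_subset_of_mem h

theorem lfpSet_mono (h : ∀ S, F S ⊆ F' S) : lfpSet F ⊆ lfpSet F' :=
  Set.sInter_subset_sInter fun S hS => (h S).trans hS

theorem gfpSet_mono (h : ∀ S, F S ⊆ F' S) : gfpSet F ⊆ gfpSet F' :=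
  Set.sUnion_subset_sUnion fun S hS => hS.trans (h S)

theorem monotone_iterate_empty (hF : Monotone F) : Monotone fun n => F^[n] ∅ :=
  hF.monotone_iterate_of_le_map (Set.empty_subset _)

theorem iterate_empty_subset_lfpSet (hF : Monotone F) (n : ℕ) : F^[n] ∅ ⊆ lfpSet F := by
  induction n with
  | zero => exact Set.empty_subset _
  | succ n ih =>
    rw [Function.iterate_succ_apply', ← map_lfpSet hF]
    exact hF ih

theorem exists_lfpSet_subset_iterate_empty [Finite Q] (hF : Monotone F) :
    ∃ n, lfpSet F ⊆ F^[n] ∅ := by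
  obtain ⟨n, hn⟩ := WellFoundedGT.monotone_chain_condition ⟨_, monotone_iterate_empty hF⟩
  refine ⟨n, lfpSet_subset_of_map_subset ?_⟩
  rw [← Function.iterate_succ_apply' F n]
  exact (hn (n + 1) n.le_succ).symm.le

end FixedPoints

theorem exists_pos_mem_sdiff_pred {Q : Type*} {S : ℕ → Set Q} {q : Q} (h0 : q ∉ S 0)
    (h : ∃ n, q ∈ S n) : ∃ i, 0 < i ∧ q ∈ S i \ S (i - 1) := by
  classical
  have hpos : 0 < Nat.find h := Nat.pos_of_ne_zero fun h' => h0 (h' ▸ Nat.find_spec h)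
  exact ⟨Nat.find h, hpos, Nat.find_spec h, Nat.find_min h (Nat.sub_lt hpos one_pos)⟩

namespace GameGraph

variable {Q : Type*} (G : GameGraph Q) {P P' : Set Q} {q : Q}

theorem PreE_mono (h : P ⊆ P') : G.PreE P ⊆ G.PreE P' :=
  fun _ ⟨y, hy, hyP⟩ => ⟨y, hy, h hyP⟩

theorem Pre1_mono (h : P ⊆ P') : G.Pre1 P ⊆ G.Pre1 P' := by
  rintro x (⟨he, hd⟩ | ⟨hs, y, hy, hyP⟩)
  · exact Or.inl ⟨he, hd.trans h⟩
  · exact Or.inr ⟨hs, y, hy, h hyP⟩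

theorem Precond_mono {W W' X X' : Set Q} (hW : W ⊆ W') (hX : X ⊆ X') :
    G.Precond W X ⊆ G.Precond W' X' :=
  Set.inter_subset_inter (G.PreE_mono hW) (G.Pre1_mono (Set.union_subset_union hW hX))

theorem PreE_empty : G.PreE ∅ = ∅ :=
  Set.eq_empty_of_forall_notMem fun _ ⟨_, _, h⟩ => h

theorem Pre1_empty : G.Pre1 ∅ = ∅ := by
  refine Set.eq_empty_of_forall_notMem ?_
  rintro x (⟨-, hd⟩ | ⟨-, _, _, h⟩)
  · obtain ⟨y, hy⟩ := G.delta_nonempty x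
    exact hd hy
  · exact h

theorem mem_env_or_mem_sys (q : Q) : q ∈ G.env ∨ q ∈ G.sys :=
  show q ∈ G.env ∪ G.sys from G.union_env_sys ▸ Set.mem_univ q

theorem delta_subset_of_mem_Pre1 (hq : q ∈ G.env) (h : q ∈ G.Pre1 P) : G.delta q ⊆ P := by
  rcases h with ⟨-, hd⟩ | ⟨hs, -⟩
  · exact hd
  · exact absurd hs (Set.disjoint_left.mp G.disjoint_env_sys hq)

end GameGraph

section Approximants

variable {Q : Type*} {G : GameGraph Q} {FA FG : Set Q}

theorem body_mono {Z Y X W Z' Y' X' W' : Set Q}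
    (hZ : Z ⊆ Z') (hY : Y ⊆ Y') (hX : X ⊆ X') (hW : W ⊆ W') :
    body G FA FG Z Y X W ⊆ body G FA FG Z' Y' X' W' :=
  Set.union_subset_union
    (Set.union_subset_union (Set.inter_subset_inter_right _ (G.Pre1_mono hZ)) (G.Pre1_mono hY))
    (Set.inter_subset_inter_right _ (G.Precond_mono hW (Set.sdiff_subset_sdiff_left hX)))

theorem innerW_mono {Z Y X Z' Y' X' : Set Q} (hZ : Z ⊆ Z') (hY : Y ⊆ Y') (hX : X ⊆ X') :
    innerW G FA FG Z Y X ⊆ innerW G FA FG Z' Y' X' :=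
  lfpSet_mono fun _ => body_mono hZ hY hX subset_rfl

theorem innerX_mono {Z Y Z' Y' : Set Q} (hZ : Z ⊆ Z') (hY : Y ⊆ Y') :
    innerX G FA FG Z Y ⊆ innerX G FA FG Z' Y' :=
  gfpSet_mono fun _ => innerW_mono hZ hY subset_rfl

theorem innerY_mono {Z Z' : Set Q} (hZ : Z ⊆ Z') : innerY G FA FG Z ⊆ innerY G FA FG Z' :=
  lfpSet_mono fun _ => innerX_mono hZ subset_rfl

theorem monotone_body (Z Y X : Set Q) : Monotone (body G FA FG Z Y X) :=
  fun _ _ => body_mono subset_rfl subset_rfl subset_rfl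

theorem monotone_innerX (Z : Set Q) : Monotone (innerX G FA FG Z) :=
  fun _ _ => innerX_mono subset_rfl

theorem body_innerW (Z Y X : Set Q) :
    body G FA FG Z Y X (innerW G FA FG Z Y X) = innerW G FA FG Z Y X :=
  map_lfpSet (monotone_body Z Y X)

theorem innerW_innerX (Z Y : Set Q) :
    innerW G FA FG Z Y (innerX G FA FG Z Y) = innerX G FA FG Z Y :=
  map_gfpSet fun _ _ => innerW_mono subset_rfl subset_rfl

theorem innerX_innerY (Z : Set Q) : innerX G FA FG Z (innerY G FA FG Z) = innerY G FA FG Z :=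
  map_lfpSet (monotone_innerX Z)

theorem innerY_phi4 : innerY G FA FG (phi4 G FA FG) = phi4 G FA FG :=
  map_gfpSet fun _ _ => innerY_mono

theorem body_phi4 :
    body G FA FG (phi4 G FA FG) (phi4 G FA FG) (phi4 G FA FG) (phi4 G FA FG) =
      phi4 G FA FG := by
  have hX := innerX_innerY (G := G) (FA := FA) (FG := FG) (phi4 G FA FG)
  rw [innerY_phi4] at hX
  have hW := innerW_innerX (G := G) (FA := FA) (FG := FG) (phi4 G FA FG) (phi4 G FA FG)
  rw [hX] at hW
  have hB := body_innerW (G := G) (FA := FA) (FG := FG) (phi4 G FA FG) (phi4 G FA FG)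
    (phi4 G FA FG)
  rwa [hW] at hB

theorem phi4_subset_Pre1 : phi4 G FA FG ⊆ G.Pre1 (phi4 G FA FG) := by
  intro q hq
  rw [← body_phi4] at hq
  rcases hq with (⟨-, h⟩ | h) | ⟨-, -, h⟩
  · exact h
  · exact h
  · exact G.Pre1_mono (Set.union_subset subset_rfl Set.sdiff_subset) h

theorem Yapprox_eq_iterate (i : ℕ) :
    Yapprox G FA FG i = (innerX G FA FG (phi4 G FA FG))^[i] ∅ := by
  induction i with
  | zero => rfl
  | succ i ih => rw [Function.iterate_succ_apply', ← ih, Yapprox]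

theorem Wapprox_eq_iterate (i j : ℕ) :
    Wapprox G FA FG i j =
      (body G FA FG (phi4 G FA FG) (Yapprox G FA FG (i - 1)) (Yapprox G FA FG i))^[j] ∅ := by
  induction j with
  | zero => rfl
  | succ j ih => rw [Function.iterate_succ_apply', ← ih, Wapprox]

theorem Yapprox_mono : Monotone (Yapprox G FA FG) := by
  rw [funext Yapprox_eq_iterate]
  exact monotone_iterate_empty (monotone_innerX _)

theorem Wapprox_mono (i : ℕ) : Monotone (Wapprox G FA FG i) := by
  rw [funext (Wapprox_eq_iterate i)]
  exact monotone_iterate_empty (monotone_body _ _ _)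

theorem Yapprox_subset_phi4 (i : ℕ) : Yapprox G FA FG i ⊆ phi4 G FA FG := by
  rw [Yapprox_eq_iterate]
  exact (iterate_empty_subset_lfpSet (monotone_innerX _) i).trans innerY_phi4.subset

theorem exists_phi4_subset_Yapprox [Finite Q] : ∃ i, phi4 G FA FG ⊆ Yapprox G FA FG i := by
  obtain ⟨i, hi⟩ := exists_lfpSet_subset_iterate_empty (monotone_innerX (G := G) (FA := FA)
    (FG := FG) (phi4 G FA FG))
  exact ⟨i, innerY_phi4.symm.subset.trans (Yapprox_eq_iterate i ▸ hi)⟩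

theorem lfpSet_body_Yapprox {i : ℕ} (hi : 0 < i) :
    lfpSet (body G FA FG (phi4 G FA FG) (Yapprox G FA FG (i - 1)) (Yapprox G FA FG i)) =
      Yapprox G FA FG i := by
  obtain ⟨i, rfl⟩ := Nat.exists_eq_add_of_lt hi
  exact innerW_innerX _ _

theorem Wapprox_subset_Yapprox {i : ℕ} (hi : 0 < i) (j : ℕ) :
    Wapprox G FA FG i j ⊆ Yapprox G FA FG i := by
  rw [Wapprox_eq_iterate]
  exact (iterate_empty_subset_lfpSet (monotone_body _ _ _) j).trans (lfpSet_body_Yapprox hi).subset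

theorem exists_Yapprox_subset_Wapprox [Finite Q] {i : ℕ} (hi : 0 < i) :
    ∃ j, Yapprox G FA FG i ⊆ Wapprox G FA FG i j := by
  obtain ⟨j, hj⟩ := exists_lfpSet_subset_iterate_empty (monotone_body (G := G) (FA := FA)
    (FG := FG) (phi4 G FA FG) (Yapprox G FA FG (i - 1)) (Yapprox G FA FG i))
  exact ⟨j, (lfpSet_body_Yapprox hi).symm.subset.trans (Wapprox_eq_iterate i j ▸ hj)⟩

end Approximants

section Rank

variable {Q : Type*} {G : GameGraph Q} {FA FG : Set Q} {f : Q → Q} {q q' : Q} {i j : ℕ}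

theorem exists_hasRank [Finite Q] (hq : q ∈ phi4 G FA FG) : ∃ i j, hasRank G FA FG q i j := by
  obtain ⟨n, hn⟩ := exists_phi4_subset_Yapprox (G := G) (FA := FA) (FG := FG)
  obtain ⟨i, hi, hY⟩ :=
    exists_pos_mem_sdiff_pred (S := Yapprox G FA FG) (Set.notMem_empty q) ⟨n, hn hq⟩
  obtain ⟨m, hm⟩ := exists_Yapprox_subset_Wapprox (G := G) (FA := FA) (FG := FG) hi
  obtain ⟨j, hj, hW⟩ :=
    exists_pos_mem_sdiff_pred (S := Wapprox G FA FG i) (Set.notMem_empty q) ⟨m, hm hY.1⟩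
  exact ⟨i, j, hi, hj, hY, hW⟩

theorem hasRank.mem_phi4 (h : hasRank G FA FG q i j) : q ∈ phi4 G FA FG :=
  Yapprox_subset_phi4 i h.2.2.1.1

theorem hasRank.le_of_mem_Yapprox (h : hasRank G FA FG q i j) {a : ℕ}
    (ha : q ∈ Yapprox G FA FG a) : i ≤ a := by
  by_contra! hlt
  exact h.2.2.1.2 (Yapprox_mono (Nat.le_sub_one_of_lt hlt) ha)

theorem mem_Pre1_Yapprox_of_mem_Wapprox (hi : 0 < i) (hW : q ∈ Wapprox G FA FG i j)
    (hG : q ∉ FG) : q ∈ G.Pre1 (Yapprox G FA FG i) := by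
  cases j with
  | zero => exact absurd hW (Set.notMem_empty q)
  | succ j =>
    rcases hW with (⟨hg, -⟩ | h) | ⟨-, -, h⟩
    · exact absurd hg hG
    · exact G.Pre1_mono (Yapprox_mono (Nat.sub_le i 1)) h
    · exact G.Pre1_mono (Set.union_subset (Wapprox_subset_Yapprox hi j) Set.sdiff_subset) h

theorem mem_Pre1_Yapprox_pred_of_mem_FA (hW : q ∈ Wapprox G FA FG i j) (hA : q ∈ FA)
    (hG : q ∉ FG) : q ∈ G.Pre1 (Yapprox G FA FG (i - 1)) := by
  cases j with
  | zero => exact absurd hW (Set.notMem_empty q)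
  | succ j =>
    rcases hW with (⟨hg, -⟩ | h) | ⟨hA', -⟩
    · exact absurd hg hG
    · exact h
    · exact absurd hA hA'

theorem hasRank.mem_FG_of_eq_one (h : hasRank G FA FG q 1 1) : q ∈ FG := by
  rcases h.2.2.2.1 with (⟨hg, -⟩ | hp) | ⟨-, hp, -⟩
  · exact hg
  · exact absurd hp (G.Pre1_empty.symm ▸ Set.notMem_empty q)
  · exact absurd hp (G.PreE_empty.symm ▸ Set.notMem_empty q)

theorem hasRank.eq_one_of_mem_FA (h : hasRank G FA FG q i j) (hA : q ∈ FA) (hG : q ∉ FG) :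
    j = 1 := by
  have h1 : q ∈ Wapprox G FA FG i 1 :=
    Or.inl (Or.inr (mem_Pre1_Yapprox_pred_of_mem_FA h.2.2.2.1 hA hG))
  have h2 : ¬1 ≤ j - 1 := fun hle => h.2.2.2.2 (Wapprox_mono i hle h1)
  have := h.2.1
  omega

theorem GoodStrategy.mem_phi4 [Finite Q] (hf : GoodStrategy G FA FG f) (hs : q ∈ G.sys)
    (hq : q ∈ phi4 G FA FG) : f q ∈ phi4 G FA FG := by
  obtain ⟨i, j, hr⟩ := exists_hasRank hq
  obtain ⟨hone, hlt⟩ := (hf q hs hq).2 i j hr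
  by_cases h11 : (i, j) = (1, 1)
  · exact hone h11
  · obtain ⟨i', j', hr', -⟩ := hlt h11
    exact hr'.mem_phi4

theorem GoodStrategy.mem_Yapprox (hf : GoodStrategy G FA FG f) (hr : hasRank G FA FG q i j)
    (hs : q ∈ G.sys) (hG : q ∉ FG) :
    f q ∈ Yapprox G FA FG i ∧ (q ∈ FA → f q ∈ Yapprox G FA FG (i - 1)) := by
  have h11 : (i, j) ≠ (1, 1) := by
    intro h
    obtain ⟨rfl, rfl⟩ := Prod.mk.inj h
    exact hG hr.mem_FG_of_eq_one
  obtain ⟨i', j', hr', hlt⟩ := ((hf q hs hr.mem_phi4).2 i j hr).2 h11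
  have hi' : i' ≤ i := by rcases hlt with h | ⟨h, -⟩ <;> omega
  refine ⟨Yapprox_mono hi' hr'.2.2.1.1, fun hA => Yapprox_mono ?_ hr'.2.2.1.1⟩
  have := hr.eq_one_of_mem_FA hA hG
  have := hr'.2.1
  rcases hlt with h | ⟨-, h⟩ <;> omega

theorem succ_mem_phi4 [Finite Q] (hf : GoodStrategy G FA FG f) (hq : q ∈ phi4 G FA FG)
    (hq' : q' ∈ G.delta q) (hmove : q ∈ G.sys → q' = f q) : q' ∈ phi4 G FA FG := by
  rcases G.mem_env_or_mem_sys q with he | hs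
  · exact G.delta_subset_of_mem_Pre1 he (phi4_subset_Pre1 hq) hq'
  · exact hmove hs ▸ hf.mem_phi4 hs hq

theorem succ_mem_Yapprox (hf : GoodStrategy G FA FG f) (hr : hasRank G FA FG q i j)
    (hG : q ∉ FG) (hq' : q' ∈ G.delta q) (hmove : q ∈ G.sys → q' = f q) :
    q' ∈ Yapprox G FA FG i ∧ (q ∈ FA → q' ∈ Yapprox G FA FG (i - 1)) := by
  rcases G.mem_env_or_mem_sys q with he | hs
  · exact ⟨G.delta_subset_of_mem_Pre1 he
        (mem_Pre1_Yapprox_of_mem_Wapprox hr.1 hr.2.2.2.1 hG) hq',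
      fun hA => G.delta_subset_of_mem_Pre1 he
        (mem_Pre1_Yapprox_pred_of_mem_FA hr.2.2.2.1 hA hG) hq'⟩
  · exact hmove hs ▸ hf.mem_Yapprox hr hs hG

theorem mem_phi4_of_mem_Lmem [Finite Q] (hf : GoodStrategy G FA FG f) (hq : q ∈ phi4 G FA FG)
    {π : ℕ → Q} (hπ : π ∈ Lmem G q f) (k : ℕ) : π k ∈ phi4 G FA FG := by
  induction k with
  | zero => exact hπ.1.1 ▸ hq
  | succ k ih => exact succ_mem_phi4 hf ih (hπ.1.2 k) (hπ.2 k)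

end Rank

/-- Lemma 3 of the paper: for all `q ∈ Z^∞`,
`L_q(H,f¹) ⊆ L̄_q(H,F_A) ∪ L_q(H,F_G)`, i.e. every play from `q` compliant with `f¹`
that visits `F_A` infinitely often also visits `F_G` infinitely often. -/
theorem strategy_wins_gr1 {Q : Type*} [Fintype Q] (G : GameGraph Q) (FA FG : Set Q)
    (f : Q → Q) (hf : GoodStrategy G FA FG f) (q : Q) (hq : q ∈ phi4 G FA FG) :
    Lmem G q f ⊆ (LBuchi G q FA)ᶜ ∪ LBuchi G q FG := by
  intro π hπ
  rw [Set.mem_union, Set.mem_compl_iff, or_iff_not_imp_left, not_not]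
  rintro ⟨-, hA⟩
  refine ⟨hπ.1, ?_⟩
  by_contra hG
  obtain ⟨N, hN⟩ : ∃ N, ∀ k, N ≤ k → π k ∉ FG := by simpa [InfOft] using hG
  choose I J hr using fun k => exists_hasRank (mem_phi4_of_mem_Lmem hf hq hπ k)
  have hstep (k : ℕ) (hk : N ≤ k) :=
    succ_mem_Yapprox hf (hr k) (hN k hk) (hπ.1.2 k) (hπ.2 k)
  have hanti : Antitone fun k => I (N + k) := antitone_nat_of_succ_le fun k =>
    (hr _).le_of_mem_Yapprox (hstep (N + k) (Nat.le_add_right N k)).1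
  obtain ⟨M, hM⟩ := WellFoundedLT.antitone_chain_condition hanti
  obtain ⟨t, ht, htA⟩ := hA (N + M)
  obtain ⟨m, rfl⟩ := Nat.exists_eq_add_of_le ht
  have hdrop := (hr _).le_of_mem_Yapprox ((hstep (N + M + m) (by omega)).2 htA)
  have hconst : I (N + M + m) = I (N + M + m + 1) := by
    have h1 := hM (M + m) (by omega)
    have h2 := hM (M + m + 1) (by omega)
    simp only [← Nat.add_assoc] at h1 h2
    omega
  have := (hr (N + M + m)).1
  omega

end GR1
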